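/- Let p ≥ 1 and let μ and ν be Borel probability measures on ℝ with finite p-th moment. Then the p-Wasserstein distance between μ and ν equals the L^p((0,1))-distance between their quantile functions: W_p(μ,ν)^p = ∫_0^1 |F_μ^{-1}(t) − F_ν^{-1}(t)|^p dt. -/

import Mathlib

open MeasureTheory Set

/-- A coupling of two Borel probability measures on `ℝ` is a measure on `ℝ × ℝ`
whose first marginal is `μ` and whose second marginal is `ν`. -/
def IsCoupling (μ ν : Measure ℝ) (π : Measure (ℝ × ℝ)) : Prop :=
  π.map Prod.fst = μ ∧ π.map Prod.snd = ν

/-- The cumulative distribution function `F_μ(x) = μ((-∞, x])`. -/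
noncomputable def cdf' (μ : Measure ℝ) (x : ℝ) : ℝ := (μ (Set.Iic x)).toReal

/-- The quantile function (monotone rearrangement) `F_μ⁻¹(t) = sup {x : F_μ(x) ≤ t}`. -/
noncomputable def quantile (μ : Measure ℝ) (t : ℝ) : ℝ := sSup {x : ℝ | cdf' μ x ≤ t}

/-- The `p`-Wasserstein distance, defined as the infimum of transport costs over couplings. -/
noncomputable def Wp (p : ℝ) (μ ν : Measure ℝ) : ℝ :=
  (⨅ π : {π : Measure (ℝ × ℝ) // IsCoupling μ ν π},
    ∫ q, |q.1 - q.2| ^ p ∂(π.1)) ^ (1 / p)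

/-!
The quantile coupling, the law of `(F_μ⁻¹, F_ν⁻¹)` under Lebesgue measure on `(0, 1)`, is a
coupling of `μ` and `ν` whose cost is the right-hand side, so it remains to show that it is optimal.
Write `|x - y| ^ p = ∫ (|x - y| - r)⁺ dρ(r)`, where `ρ` is the second derivative of `r ^ p`, and
`(|x - y| - r)⁺` as the length of `{s | y ≤ s < x - r} ∪ {s | x ≤ s < y - r}`. By Tonelli the cost of
a coupling `π` becomes `∫∫ π {y ≤ s, s + r < x} + π {x ≤ s, s + r < y} ds dρ(r)`. Every coupling
gives the quadrant `{x ≤ s, u < y}` mass at least `(F_μ(s) - F_ν(u))⁺`, and the quantile coupling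
attains this bound for all quadrants at once.
-/

open Filter ProbabilityTheory

section Quantile

variable (μ : Measure ℝ) [IsProbabilityMeasure μ]

lemma cdf'_eq_cdf : cdf' μ = cdf μ := funext fun x => (cdf_eq_real μ x).symm

lemma nonempty_setOf_cdf'_le {t : ℝ} (ht : 0 < t) : {x | cdf' μ x ≤ t}.Nonempty := by
  obtain ⟨x, hx⟩ := ((tendsto_cdf_atBot μ).eventually_lt_const ht).exists
  exact ⟨x, by simpa [cdf'_eq_cdf] using hx.le⟩

lemma bddAbove_setOf_cdf'_le {t : ℝ} (ht : t < 1) : BddAbove {x | cdf' μ x ≤ t} := by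
  obtain ⟨z, hz⟩ := ((tendsto_cdf_atTop μ).eventually_const_lt ht).exists
  refine ⟨z, fun x hx => ?_⟩
  rw [mem_ofPred_eq, cdf'_eq_cdf] at hx
  exact (monotone_cdf μ).reflect_lt (hx.trans_lt hz) |>.le

lemma quantile_le_of_lt_cdf {t x : ℝ} (ht : 0 < t) (h : t < cdf μ x) : quantile μ t ≤ x :=
  csSup_le (nonempty_setOf_cdf'_le μ ht) fun y hy =>
    (monotone_cdf μ).reflect_lt (by rw [mem_ofPred_eq, cdf'_eq_cdf] at hy; linarith) |>.le

lemma le_cdf_of_quantile_le {t x : ℝ} (ht : t < 1) (h : quantile μ t ≤ x) : t ≤ cdf μ x := by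
  have right_of_x : ∀ y, x < y → t ≤ cdf μ y := fun y hxy => by
    by_contra! hy
    have : y ≤ quantile μ t :=
      le_csSup (bddAbove_setOf_cdf'_le μ ht) (by rw [mem_ofPred_eq, cdf'_eq_cdf]; exact hy.le)
    linarith
  exact ge_of_tendsto
    (((cdf μ).right_continuous x).tendsto.mono_left (nhdsWithin_mono _ Ioi_subset_Ici_self))
    (eventually_nhdsWithin_of_forall right_of_x)

lemma monotoneOn_quantile : MonotoneOn (quantile μ) (Ioo 0 1) := fun _ ha _ hb hab =>
  csSup_le_csSup (bddAbove_setOf_cdf'_le μ hb.2) (nonempty_setOf_cdf'_le μ ha.1)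
    fun _ hx => le_trans hx hab

lemma aemeasurable_quantile : AEMeasurable (quantile μ) (volume.restrict (Ioo 0 1)) :=
  aemeasurable_restrict_of_monotoneOn measurableSet_Ioo (monotoneOn_quantile μ)

end Quantile

lemma Real.volume_eq_of_Ioo_subset_of_subset_Icc {s : Set ℝ} {a b : ℝ} (hIoo : Ioo a b ⊆ s)
    (hIcc : s ⊆ Icc a b) : volume s = ENNReal.ofReal (b - a) :=
  le_antisymm (Real.volume_Icc ▸ measure_mono hIcc) (Real.volume_Ioo ▸ measure_mono hIoo)

section QuantileLaw

variable (μ ν : Measure ℝ) [IsProbabilityMeasure μ] [IsProbabilityMeasure ν]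

lemma volume_restrict_setOf_quantile_le (x : ℝ) :
    volume.restrict (Ioo 0 1) {t | quantile μ t ≤ x} = μ (Iic x) := by
  rw [Measure.restrict_apply' measurableSet_Ioo, ← ofReal_cdf, ← sub_zero (cdf μ x)]
  refine Real.volume_eq_of_Ioo_subset_of_subset_Icc (fun t ht => ?_) fun t ⟨hq, ht⟩ => ?_
  · have ht1 : t < 1 := ht.2.trans_le (cdf_le_one μ x)
    exact ⟨quantile_le_of_lt_cdf μ ht.1 ht.2, ht.1, ht1⟩
  · exact ⟨ht.1.le, le_cdf_of_quantile_le μ ht.2 hq⟩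

lemma volume_restrict_setOf_quantile_le_and_lt_quantile (s u : ℝ) :
    volume.restrict (Ioo 0 1) {t | quantile μ t ≤ s ∧ u < quantile ν t}
      = ENNReal.ofReal (cdf μ s - cdf ν u) := by
  rw [Measure.restrict_apply' measurableSet_Ioo]
  refine Real.volume_eq_of_Ioo_subset_of_subset_Icc (fun t ht => ?_) fun t ⟨⟨hs, hu⟩, ht⟩ => ?_
  · have ht01 : t ∈ Ioo 0 1 :=
      ⟨(cdf_nonneg ν u).trans_lt ht.1, ht.2.trans_le (cdf_le_one μ s)⟩
    refine ⟨⟨quantile_le_of_lt_cdf μ ht01.1 ht.2, ?_⟩, ht01⟩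
    by_contra! hu
    exact (le_cdf_of_quantile_le ν ht01.2 hu).not_gt ht.1
  · refine ⟨?_, le_cdf_of_quantile_le μ ht.2 hs⟩
    by_contra! hlt
    exact (quantile_le_of_lt_cdf ν ht.1 hlt).not_gt hu

lemma map_quantile : (volume.restrict (Ioo 0 1)).map (quantile μ) = μ := by
  refine (Measure.ext_of_Iic μ _ fun x => ?_).symm
  rw [Measure.map_apply_of_aemeasurable (aemeasurable_quantile μ) measurableSet_Iic]
  exact (volume_restrict_setOf_quantile_le μ x).symm

end QuantileLaw

section Coupling

variable {μ ν : Measure ℝ} {π : Measure (ℝ × ℝ)}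

lemma IsCoupling.isProbabilityMeasure [IsProbabilityMeasure μ] (h : IsCoupling μ ν π) :
    IsProbabilityMeasure π :=
  (Measure.isProbabilityMeasure_map_iff measurable_fst.aemeasurable).1 (h.1 ▸ inferInstance)

lemma IsCoupling.swap (h : IsCoupling μ ν π) : IsCoupling ν μ (π.map Prod.swap) :=
  ⟨(Measure.map_map measurable_fst measurable_swap).trans h.2,
    (Measure.map_map measurable_snd measurable_swap).trans h.1⟩

lemma measurableSet_quadrant (s u : ℝ) : MeasurableSet {q : ℝ × ℝ | q.1 ≤ s ∧ u < q.2} :=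
  (measurableSet_le measurable_fst measurable_const).inter
    (measurableSet_lt measurable_const measurable_snd)

lemma IsCoupling.ofReal_cdf_sub_le [IsProbabilityMeasure μ] [IsProbabilityMeasure ν]
    (h : IsCoupling μ ν π) (s u : ℝ) :
    ENNReal.ofReal (cdf μ s - cdf ν u) ≤ π {q | q.1 ≤ s ∧ u < q.2} := by
  have marginal_cdf (f : ℝ × ℝ → ℝ) (hf : Measurable f) (ρ : Measure ℝ) [IsProbabilityMeasure ρ]
      (hρ : π.map f = ρ) (x : ℝ) : π {q | f q ≤ x} = ENNReal.ofReal (cdf ρ x) := by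
    rw [ofReal_cdf, ← hρ, Measure.map_apply hf measurableSet_Iic]
    rfl
  have cover : π {q | q.1 ≤ s} ≤ π {q | q.2 ≤ u} + π {q | q.1 ≤ s ∧ u < q.2} :=
    (measure_mono fun q hq => (le_or_gt q.2 u).imp id (⟨hq, ·⟩)).trans (measure_union_le _ _)
  rw [ENNReal.ofReal_sub _ (cdf_nonneg ν u), tsub_le_iff_left,
    ← marginal_cdf _ measurable_fst μ h.1, ← marginal_cdf _ measurable_snd ν h.2]
  exact cover

lemma IsCoupling.integrable_rpow_abs_sub {p : ℝ} (hp : 0 < p) (h : IsCoupling μ ν π)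
    (hμ : Integrable (fun x => |x| ^ p) μ) (hν : Integrable (fun x => |x| ^ p) ν) :
    Integrable (fun q => |q.1 - q.2| ^ p) π := by
  have hp' : ENNReal.ofReal p ≠ 0 := ENNReal.ofReal_ne_zero_iff.2 hp
  have marginal {f : ℝ × ℝ → ℝ} (hf : Measurable f) {ρ : Measure ℝ} (hfρ : π.map f = ρ)
      (hρ : Integrable (fun x => |x| ^ p) ρ) : MemLp f (ENNReal.ofReal p) π := by
    subst hfρ
    refine (memLp_map_measure_iff aestronglyMeasurable_id hf.aemeasurable).1 ?_
    exact (integrable_norm_rpow_iff aestronglyMeasurable_id hp' ENNReal.ofReal_ne_top).1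
      (by simpa [ENNReal.toReal_ofReal hp.le] using hρ)
  simpa [ENNReal.toReal_ofReal hp.le] using
    ((marginal measurable_fst h.1 hμ).sub (marginal measurable_snd h.2 hν)).integrable_norm_rpow
      hp' ENNReal.ofReal_ne_top

/-- The comonotone coupling of `μ` and `ν`. -/
noncomputable def quantileCoupling (μ ν : Measure ℝ) : Measure (ℝ × ℝ) :=
  (volume.restrict (Ioo 0 1)).map fun t => (quantile μ t, quantile ν t)

variable [IsProbabilityMeasure μ] [IsProbabilityMeasure ν]

lemma aemeasurable_quantile_prodMk :
    AEMeasurable (fun t => (quantile μ t, quantile ν t)) (volume.restrict (Ioo 0 1)) :=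
  (aemeasurable_quantile μ).prodMk (aemeasurable_quantile ν)

lemma isCoupling_quantileCoupling : IsCoupling μ ν (quantileCoupling μ ν) :=
  ⟨(AEMeasurable.map_map_of_aemeasurable measurable_fst.aemeasurable
      aemeasurable_quantile_prodMk).trans (map_quantile μ),
    (AEMeasurable.map_map_of_aemeasurable measurable_snd.aemeasurable
      aemeasurable_quantile_prodMk).trans (map_quantile ν)⟩

lemma map_swap_quantileCoupling :
    (quantileCoupling μ ν).map Prod.swap = quantileCoupling ν μ :=
  AEMeasurable.map_map_of_aemeasurable measurable_swap.aemeasurable aemeasurable_quantile_prodMk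

lemma quantileCoupling_quadrant_le (h : IsCoupling μ ν π) (s u : ℝ) :
    quantileCoupling μ ν {q | q.1 ≤ s ∧ u < q.2} ≤ π {q | q.1 ≤ s ∧ u < q.2} := by
  rw [quantileCoupling, Measure.map_apply_of_aemeasurable aemeasurable_quantile_prodMk
    (measurableSet_quadrant s u)]
  exact (volume_restrict_setOf_quantile_le_and_lt_quantile μ ν s u).trans_le
    (h.ofReal_cdf_sub_le s u)

lemma quantileCoupling_quadrant_swap_le (h : IsCoupling μ ν π) (s u : ℝ) :
    quantileCoupling μ ν {q | q.2 ≤ s ∧ u < q.1} ≤ π {q | q.2 ≤ s ∧ u < q.1} := by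
  have swap_apply (ρ : Measure (ℝ × ℝ)) :
      ρ {q | q.2 ≤ s ∧ u < q.1} = ρ.map Prod.swap {q | q.1 ≤ s ∧ u < q.2} :=
    (Measure.map_apply measurable_swap (measurableSet_quadrant s u)).symm
  rw [swap_apply, swap_apply, map_swap_quantileCoupling]
  exact quantileCoupling_quadrant_le h.swap s u

end Coupling

section LayerCake

lemma intervalIntegrable_mul_rpow_sub_two_mul_sub {p : ℝ} (hp : 1 < p) (d : ℝ) :
    IntervalIntegrable (fun r => p * (p - 1) * r ^ (p - 2) * (d - r)) volume 0 d :=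
  ((intervalIntegral.intervalIntegrable_rpow' (by linarith)).const_mul _).mul_continuousOn
    (continuous_const.sub continuous_id).continuousOn

lemma integral_mul_rpow_sub_two_mul_sub {p d : ℝ} (hp : 1 < p) (hd : 0 ≤ d) :
    ∫ r in 0..d, p * (p - 1) * r ^ (p - 2) * (d - r) = d ^ p := by
  set F : ℝ → ℝ := fun r => p * d * r ^ (p - 1) - (p - 1) * r ^ p
  have hF : ∀ r ∈ Ioo 0 d, HasDerivAt F (p * (p - 1) * r ^ (p - 2) * (d - r)) r := by
    intro r hr
    have hr0 : r ≠ 0 := hr.1.ne'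
    have hpow : r ^ (p - 1) = r ^ (p - 2) * r := by rw [← Real.rpow_add_one hr0]; ring_nf
    refine (((Real.hasDerivAt_rpow_const (Or.inl hr0)).const_mul (p * d)).sub
      ((Real.hasDerivAt_rpow_const (Or.inl hr0)).const_mul (p - 1))).congr_deriv ?_
    rw [show p - 1 - 1 = p - 2 by ring, hpow]
    ring
  have hF_cont : ContinuousOn F (Icc 0 d) :=
    ((continuous_const.mul (Real.continuous_rpow_const (by linarith))).sub
      (continuous_const.mul (Real.continuous_rpow_const (by linarith)))).continuousOn
  rw [intervalIntegral.integral_eq_sub_of_hasDerivAt_of_le hd hF_cont hF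
    (intervalIntegrable_mul_rpow_sub_two_mul_sub hp d)]
  simp only [F, Real.zero_rpow (by linarith : p - 1 ≠ 0), Real.zero_rpow (by linarith : p ≠ 0)]
  rw [show d ^ p = d ^ (p - 1 + 1) by ring_nf, Real.rpow_add' hd (by linarith), Real.rpow_one]
  ring

/-- The second derivative of `r ↦ max r 0 ^ p`, as a measure; for `p = 1` it is the Dirac mass
carried by the kink at `0`. -/
noncomputable def rpowCurvatureMeasure (p : ℝ) : Measure ℝ :=
  if p = 1 then Measure.dirac 0
  else (volume.restrict (Ioi 0)).withDensity fun r => ENNReal.ofReal (p * (p - 1) * r ^ (p - 2))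

instance (p : ℝ) : SigmaFinite (rpowCurvatureMeasure p) := by
  unfold rpowCurvatureMeasure
  split_ifs
  · infer_instance
  · exact SigmaFinite.withDensity_ofReal _

lemma ae_nonneg_rpowCurvatureMeasure (p : ℝ) : ∀ᵐ r ∂rpowCurvatureMeasure p, 0 ≤ r := by
  unfold rpowCurvatureMeasure
  split_ifs
  · simp
  · exact (withDensity_absolutelyContinuous _ _).ae_le
      (ae_restrict_of_forall_mem measurableSet_Ioi fun _ hr => le_of_lt hr)

/-- Taylor's formula with integral remainder for `r ↦ max r 0 ^ p` at `0`. -/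
lemma lintegral_ofReal_sub_rpowCurvatureMeasure {p d : ℝ} (hp : 1 ≤ p) (hd : 0 ≤ d) :
    ∫⁻ r, ENNReal.ofReal (d - r) ∂rpowCurvatureMeasure p = ENNReal.ofReal (d ^ p) := by
  unfold rpowCurvatureMeasure
  split_ifs with hp1
  · simp [hp1]
  replace hp : 1 < p := lt_of_le_of_ne hp (Ne.symm hp1)
  set f : ℝ → ℝ := fun r => p * (p - 1) * r ^ (p - 2) * (d - r)
  have density_mul (r : ℝ) (hr : r ∈ Ioi 0) :
      ENNReal.ofReal (p * (p - 1) * r ^ (p - 2)) * ENNReal.ofReal (d - r) = ENNReal.ofReal (f r) :=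
    (ENNReal.ofReal_mul (by have := Real.rpow_nonneg hr.le (p - 2); positivity)).symm
  have vanish (r : ℝ) (hr : r ∈ Ioi d) : ENNReal.ofReal (f r) = 0 :=
    ENNReal.ofReal_eq_zero.2 (mul_nonpos_of_nonneg_of_nonpos
      (by have := Real.rpow_nonneg (hd.trans hr.le) (p - 2); positivity) (by linarith [hr.out]))
  rw [lintegral_withDensity_eq_lintegral_mul _ (by fun_prop) (by fun_prop)]
  simp only [Pi.mul_apply]
  rw [setLIntegral_congr_fun measurableSet_Ioi density_mul, ← Ioc_union_Ioi_eq_Ioi hd,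
    lintegral_union measurableSet_Ioi (Ioc_disjoint_Ioi le_rfl),
    setLIntegral_congr_fun measurableSet_Ioi vanish, lintegral_zero, add_zero,
    ← ofReal_integral_eq_lintegral_ofReal
      ((intervalIntegrable_iff_integrableOn_Ioc_of_le hd).1
        (intervalIntegrable_mul_rpow_sub_two_mul_sub hp d))
      (ae_restrict_of_forall_mem measurableSet_Ioc fun r hr => ?_),
    ← intervalIntegral.integral_of_le hd, integral_mul_rpow_sub_two_mul_sub hp hd]
  have := Real.rpow_nonneg hr.1.le (p - 2)
  have : 0 ≤ d - r := sub_nonneg.2 hr.2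
  have : 0 ≤ p - 1 := by linarith
  positivity

end LayerCake

section TransportCost

lemma ofReal_abs_sub_sub_eq_volume_add_volume {x y r : ℝ} (hr : 0 ≤ r) :
    ENNReal.ofReal (|x - y| - r) = volume (Ico y (x - r)) + volume (Ico x (y - r)) := by
  rw [Real.volume_Ico, Real.volume_Ico]
  rcases le_total y x with h | h
  · rw [abs_of_nonneg (sub_nonneg.2 h), ENNReal.ofReal_eq_zero.2 (by linarith : y - r - x ≤ 0),
      add_zero, sub_right_comm]
  · rw [abs_of_nonpos (sub_nonpos.2 h), ENNReal.ofReal_eq_zero.2 (by linarith : x - r - y ≤ 0),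
      zero_add, neg_sub, sub_right_comm]

lemma lintegral_volume_Ico_eq_lintegral_measure {X : Type*} [MeasurableSpace X] (π : Measure X)
    [SFinite π] {f g : X → ℝ} (hf : Measurable f) (hg : Measurable g) :
    ∫⁻ x, volume (Ico (f x) (g x)) ∂π = ∫⁻ s, π {x | f x ≤ s ∧ s < g x} := by
  have hA : MeasurableSet {z : X × ℝ | f z.1 ≤ z.2 ∧ z.2 < g z.1} :=
    (measurableSet_le (hf.comp measurable_fst) measurable_snd).inter
      (measurableSet_lt measurable_snd (hg.comp measurable_fst))
  exact (Measure.prod_apply hA).symm.trans (Measure.prod_apply_symm hA)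

lemma lintegral_rpow_abs_sub_eq {p : ℝ} (hp : 1 ≤ p) (π : Measure (ℝ × ℝ)) [SFinite π] :
    ∫⁻ q, ENNReal.ofReal (|q.1 - q.2| ^ p) ∂π = ∫⁻ r,
      ((∫⁻ s, π {q | q.2 ≤ s ∧ s + r < q.1}) + ∫⁻ s, π {q | q.1 ≤ s ∧ s + r < q.2})
        ∂rpowCurvatureMeasure p := by
  have hIco (r : ℝ) {f g : ℝ × ℝ → ℝ} (hf : Measurable f) (hg : Measurable g) :
      ∫⁻ q, volume (Ico (f q) (g q - r)) ∂π = ∫⁻ s, π {q | f q ≤ s ∧ s + r < g q} := by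
    simp_rw [lintegral_volume_Ico_eq_lintegral_measure π hf (hg.sub_const r), lt_sub_iff_add_lt]
  calc ∫⁻ q, ENNReal.ofReal (|q.1 - q.2| ^ p) ∂π
      = ∫⁻ q, ∫⁻ r, ENNReal.ofReal (|q.1 - q.2| - r) ∂rpowCurvatureMeasure p ∂π :=
        lintegral_congr fun q => (lintegral_ofReal_sub_rpowCurvatureMeasure hp (abs_nonneg _)).symm
    _ = ∫⁻ r, ∫⁻ q, ENNReal.ofReal (|q.1 - q.2| - r) ∂π ∂rpowCurvatureMeasure p :=
        lintegral_lintegral_swap (by fun_prop)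
    _ = ∫⁻ r, ((∫⁻ s, π {q | q.2 ≤ s ∧ s + r < q.1}) + ∫⁻ s, π {q | q.1 ≤ s ∧ s + r < q.2})
          ∂rpowCurvatureMeasure p := by
        refine lintegral_congr_ae ?_
        filter_upwards [ae_nonneg_rpowCurvatureMeasure p] with r hr
        simp_rw [ofReal_abs_sub_sub_eq_volume_add_volume hr]
        rw [lintegral_add_left (by simp_rw [Real.volume_Ico]; fun_prop),
          hIco r measurable_snd measurable_fst, hIco r measurable_fst measurable_snd]

end TransportCost

section Optimality

variable {p : ℝ} {μ ν : Measure ℝ} [IsProbabilityMeasure μ] [IsProbabilityMeasure ν]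
  {π : Measure (ℝ × ℝ)}

lemma lintegral_cost_quantileCoupling_le (hp : 1 ≤ p) (h : IsCoupling μ ν π) :
    ∫⁻ q, ENNReal.ofReal (|q.1 - q.2| ^ p) ∂quantileCoupling μ ν
      ≤ ∫⁻ q, ENNReal.ofReal (|q.1 - q.2| ^ p) ∂π := by
  have := h.isProbabilityMeasure
  have := (isCoupling_quantileCoupling (μ := μ) (ν := ν)).isProbabilityMeasure
  rw [lintegral_rpow_abs_sub_eq hp, lintegral_rpow_abs_sub_eq hp]
  exact lintegral_mono fun r => add_le_add
    (lintegral_mono fun s => quantileCoupling_quadrant_swap_le h s (s + r))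
    (lintegral_mono fun s => quantileCoupling_quadrant_le h s (s + r))

lemma integral_cost_quantileCoupling_le (hp : 1 ≤ p) (h : IsCoupling μ ν π)
    (hμ : Integrable (fun x => |x| ^ p) μ) (hν : Integrable (fun x => |x| ^ p) ν) :
    ∫ q, |q.1 - q.2| ^ p ∂quantileCoupling μ ν ≤ ∫ q, |q.1 - q.2| ^ p ∂π := by
  have hcost_nonneg : 0 ≤ fun q : ℝ × ℝ => |q.1 - q.2| ^ p := fun q => by positivity
  have hcost_meas : Measurable fun q : ℝ × ℝ => |q.1 - q.2| ^ p := by fun_prop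
  rw [integral_eq_lintegral_of_nonneg_ae (.of_forall hcost_nonneg) hcost_meas.aestronglyMeasurable,
    integral_eq_lintegral_of_nonneg_ae (.of_forall hcost_nonneg) hcost_meas.aestronglyMeasurable]
  -- Without finite moments the right side could be the junk value `0` of a divergent integral.
  exact ENNReal.toReal_mono
    ((h.integrable_rpow_abs_sub (by linarith) hμ hν).lintegral_lt_top.ne)
    (lintegral_cost_quantileCoupling_le hp h)

end Optimality

/-- For Borel probability measures on `ℝ` with finite `p`-th moment, the `p`-Wasserstein
distance equals the `L^p((0,1))` distance of the quantile functions. -/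
theorem wasserstein_eq_quantile_distance (p : ℝ) (hp : 1 ≤ p)
    (μ ν : Measure ℝ) [IsProbabilityMeasure μ] [IsProbabilityMeasure ν]
    (hμ : Integrable (fun x => |x| ^ p) μ) (hν : Integrable (fun x => |x| ^ p) ν) :
    Wp p μ ν ^ p = ∫ t in Ioo (0 : ℝ) 1, |quantile μ t - quantile ν t| ^ p := by
  have hcost_nonneg (ρ : Measure (ℝ × ℝ)) : 0 ≤ ∫ q, |q.1 - q.2| ^ p ∂ρ :=
    integral_nonneg fun q => by positivity
  have hbdd : BddBelow (range fun π : {π // IsCoupling μ ν π} => ∫ q, |q.1 - q.2| ^ p ∂π.1) :=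
    ⟨0, by rintro _ ⟨π, rfl⟩; exact hcost_nonneg π⟩
  have hinf : ⨅ π : {π // IsCoupling μ ν π}, ∫ q, |q.1 - q.2| ^ p ∂π.1
      = ∫ q, |q.1 - q.2| ^ p ∂quantileCoupling μ ν :=
    have : Nonempty {π // IsCoupling μ ν π} := ⟨⟨_, isCoupling_quantileCoupling⟩⟩
    le_antisymm (ciInf_le hbdd ⟨_, isCoupling_quantileCoupling⟩)
      (le_ciInf fun π => integral_cost_quantileCoupling_le hp π.2 hμ hν)
  rw [Wp, hinf, ← Real.rpow_mul (hcost_nonneg _), one_div_mul_cancel (by linarith),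
    Real.rpow_one, quantileCoupling, integral_map aemeasurable_quantile_prodMk
      (by fun_prop (disch := linarith) : Continuous fun q : ℝ × ℝ => |q.1 - q.2| ^ p).aestronglyMeasurable]
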